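/- For every integer k ≥ 1, f(P_3^k) = 2, where f(G) = min{Δ(G[S]) : S ⊆ V(G), |S| = α(G)+1}. -/

import Mathlib

open Finset

/-- The path graph on vertex set `{1,…,m}`, realized on `Fin m`
(vertex `i : Fin m` stands for label `i+1`); label `i` is adjacent to label `i+1`. -/
def pathGraph' (m : ℕ) : SimpleGraph (Fin m) where
  Adj i j := (i : ℕ) + 1 = (j : ℕ) ∨ (j : ℕ) + 1 = (i : ℕ)
  symm := by constructor; intro i j h; tauto
  loopless := by constructor; intro i h; omega

/-- The Cartesian (box) product of `k` copies of the path `P_m`: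
two vertices are adjacent iff they differ in exactly one coordinate, and
in that coordinate they are adjacent in the path. -/
def boxPower (m k : ℕ) : SimpleGraph (Fin k → Fin m) where
  Adj u v := ∃ i, (pathGraph' m).Adj (u i) (v i) ∧ ∀ j, j ≠ i → u j = v j
  symm := by
    constructor
    rintro u v ⟨i, hadj, h⟩
    exact ⟨i, hadj.symm, fun j hj => (h j hj).symm⟩
  loopless := by
    constructor
    rintro u ⟨i, hadj, -⟩
    exact hadj.ne rfl

/-- A finite set of vertices is independent if its vertices are pairwise nonadjacent. -/
def IsIndepFinset {V : Type*} (G : SimpleGraph V) (S : Finset V) : Prop :=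
  ∀ u ∈ S, ∀ v ∈ S, ¬ G.Adj u v

/-- The independence number `α(G)` of a finite graph. -/
noncomputable def indepNum {V : Type*} [Fintype V] (G : SimpleGraph V) : ℕ :=
  sSup {n | ∃ S : Finset V, IsIndepFinset G S ∧ S.card = n}

open scoped Classical in
/-- The maximum degree `Δ(G[S])` of the subgraph of `G` induced on `S`. -/
noncomputable def maxDegOn {V : Type*} (G : SimpleGraph V) (S : Finset V) : ℕ :=
  S.sup fun v => (S.filter fun u => G.Adj v u).card

/-- `f(G)`: the minimum, over vertex subsets `S` of size `α(G)+1`, of the maximum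
degree of the induced subgraph `G[S]`. -/
noncomputable def minMaxDeg {V : Type*} [Fintype V] (G : SimpleGraph V) : ℕ :=
  sInf {d | ∃ S : Finset V, S.card = indepNum G + 1 ∧ maxDegOn G S = d}

/-!
The even vertices (coordinate sum even) form an independent set of size `(3 ^ k + 1) / 2`, and the
vertices whose coordinates other than the first have even sum are one more vertex inducing
disjoint copies of `P_3`; so `f ≤ 2` once this independent set is known to be maximum.

Both that and `f ≥ 2` follow from: a set `S` inducing maximum degree at most one has
`2 |S| ≤ 3 ^ k + 1`. This is a Huang-style signing argument. A signing `M` of the adjacency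
matrix satisfies `M² ≥ 2` on the orthogonal complement of one vector `e`, whereas a vector `v`
supported on `S` has `|(M v)|_S| ≤ |v|` because every vertex of `S` has at most one neighbour in
`S`. Hence no nonzero `v` supported on `S` with `v ⟂ e` and `M v` supported on `S` exists, and
counting the `|S|` unknowns against the `1 + |Sᶜ|` linear conditions gives the bound.
-/

open Matrix

section Layers

variable {α R : Type*} {k : ℕ}

theorem sum_pi_fin_succ [Fintype α] [AddCommMonoid R] (f : (Fin (k + 1) → α) → R) :
    ∑ y, f y = ∑ t, ∑ x, f (Fin.cons t x) := by
  rw [← Fintype.sum_prod_type']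
  exact (Fintype.sum_equiv (Fin.consEquiv fun _ => α) _ _ fun _ => rfl).symm

def layer (v : (Fin (k + 1) → α) → R) (t : α) : (Fin k → α) → R :=
  fun x => v (Fin.cons t x)

@[simp]
theorem layer_apply (v : (Fin (k + 1) → α) → R) (t : α) (x : Fin k → α) :
    layer v t x = v (Fin.cons t x) := rfl

theorem dotProduct_eq_sum_layer [Fintype α] [NonUnitalNonAssocSemiring R]
    (u w : (Fin (k + 1) → α) → R) : u ⬝ᵥ w = ∑ t, layer u t ⬝ᵥ layer w t :=
  sum_pi_fin_succ _

end Layers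

section BoxPower

variable {m k : ℕ}

theorem boxPower_adj_cons_iff {t s : Fin m} {x y : Fin k → Fin m} :
    (boxPower m (k + 1)).Adj (Fin.cons t x) (Fin.cons s y) ↔
      t = s ∧ (boxPower m k).Adj x y ∨ x = y ∧ (pathGraph' m).Adj t s := by
  constructor
  · rintro ⟨i, hadj, hrest⟩
    rcases Fin.eq_zero_or_eq_succ i with rfl | ⟨j, rfl⟩
    · refine Or.inr ⟨funext fun j => ?_, by simpa using hadj⟩
      simpa using hrest j.succ (Fin.succ_ne_zero j)
    · refine Or.inl ⟨by simpa using hrest 0 (Fin.succ_ne_zero j).symm, j, by simpa using hadj,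
        fun l hl => by simpa using hrest l.succ (by simpa [Fin.succ_inj] using hl)⟩
  · rintro (⟨rfl, j, hadj, hrest⟩ | ⟨rfl, hadj⟩)
    · refine ⟨j.succ, by simpa using hadj, fun l hl => ?_⟩
      rcases Fin.eq_zero_or_eq_succ l with rfl | ⟨l, rfl⟩
      · simp
      · simpa using hrest l (by simpa [Fin.succ_inj] using hl)
    · refine ⟨0, by simpa using hadj, fun l hl => ?_⟩
      rcases Fin.eq_zero_or_eq_succ l with rfl | ⟨l, rfl⟩
      · exact absurd rfl hl
      · simp

theorem boxPower_adj_sum {x y : Fin k → Fin m} (h : (boxPower m k).Adj x y) :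
    (∑ i, (x i : ℕ)) + 1 = ∑ i, (y i : ℕ) ∨ (∑ i, (y i : ℕ)) + 1 = ∑ i, (x i : ℕ) := by
  obtain ⟨i, hadj, hrest⟩ := h
  have hx := add_sum_erase univ (fun i => (x i : ℕ)) (mem_univ i)
  have hy := add_sum_erase univ (fun i => (y i : ℕ)) (mem_univ i)
  have herase : ∑ j ∈ univ.erase i, (x j : ℕ) = ∑ j ∈ univ.erase i, (y j : ℕ) :=
    sum_congr rfl fun j hj => by rw [hrest j (ne_of_mem_erase hj)]
  rcases hadj with h | h <;> omega

def evenVertices (m k : ℕ) : Finset (Fin k → Fin m) :=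
  univ.filter fun x => Even (∑ i, (x i : ℕ))

theorem isIndepFinset_evenVertices : IsIndepFinset (boxPower m k) (evenVertices m k) := by
  intro x hx y hy hxy
  simp only [evenVertices, mem_filter, mem_univ, true_and] at hx hy
  rcases boxPower_adj_sum hxy with h | h
  · exact Nat.not_even_iff_odd.2 (h ▸ hx.add_one) hy
  · exact Nat.not_even_iff_odd.2 (h ▸ hy.add_one) hx

end BoxPower

theorem two_mul_card_evenVertices (k : ℕ) : 2 * #(evenVertices 3 k) = 3 ^ k + 1 := by
  induction k with
  | zero => rfl
  | succ k ih =>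
    have hsplit : #(evenVertices 3 (k + 1)) =
        #(evenVertices 3 k) + #(univ.filter fun x : Fin k → Fin 3 => ¬ Even (∑ i, (x i : ℕ)))
          + #(evenVertices 3 k) := by
      simp only [evenVertices, card_filter]
      rw [sum_pi_fin_succ, Fin.sum_univ_three]
      simp [Fin.sum_univ_succ, Nat.even_add_one, parity_simps]
    have hcompl : #(evenVertices 3 k) +
        #(univ.filter fun x : Fin k → Fin 3 => ¬ Even (∑ i, (x i : ℕ))) = 3 ^ k := by
      rw [evenVertices, card_filter_add_card_filter_not, card_univ]
      simp
    rw [pow_succ]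
    omega

section MaxDegOn

variable {V : Type*} {G : SimpleGraph V} {S : Finset V}

open scoped Classical in
theorem maxDegOn_le_iff {d : ℕ} : maxDegOn G S ≤ d ↔ ∀ x ∈ S, #(S.filter (G.Adj x)) ≤ d :=
  Finset.sup_le_iff

theorem IsIndepFinset.maxDegOn_eq_zero (h : IsIndepFinset G S) : maxDegOn G S = 0 := by
  classical
  refine Nat.le_zero.1 (maxDegOn_le_iff.2 fun x hx => ?_)
  simp [filter_eq_empty_iff.2 fun y hy => h x hx y hy]

open scoped Classical in
theorem sum_sq_mulVec_le_of_maxDegOn_le_one [Fintype V] (hS : maxDegOn G S ≤ 1)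
    (A : Matrix V V ℝ) (hA : ∀ x y, |A x y| ≤ 1) (hAG : ∀ x y, ¬ G.Adj x y → A x y = 0)
    (v : V → ℝ) (hv : ∀ x ∉ S, v x = 0) :
    ∑ x ∈ S, (A *ᵥ v) x ^ 2 ≤ ∑ x, v x ^ 2 := by
  have hdeg := maxDegOn_le_iff.1 hS
  have hlocal : ∀ x ∈ S, (A *ᵥ v) x ^ 2 ≤ ∑ y ∈ S.filter (G.Adj x), v y ^ 2 := by
    intro x hx
    have hsupp : (A *ᵥ v) x = ∑ y ∈ S.filter (G.Adj x), A x y * v y := by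
      refine (sum_subset (subset_univ _) fun y _ hy => ?_).symm
      by_cases hyS : y ∈ S
      · exact mul_eq_zero_of_left (hAG x y fun hxy => hy (mem_filter.2 ⟨hyS, hxy⟩)) _
      · rw [hv y hyS, mul_zero]
    calc (A *ᵥ v) x ^ 2
        ≤ #(S.filter (G.Adj x)) * ∑ y ∈ S.filter (G.Adj x), (A x y * v y) ^ 2 :=
          hsupp ▸ sq_sum_le_card_mul_sum_sq
      _ ≤ 1 * ∑ y ∈ S.filter (G.Adj x), v y ^ 2 := by
          refine mul_le_mul (by exact_mod_cast hdeg x hx) (sum_le_sum fun y _ => ?_)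
            (sum_nonneg fun _ _ => sq_nonneg _) zero_le_one
          rw [mul_pow, ← sq_abs (A x y)]
          exact mul_le_of_le_one_left (sq_nonneg _) (pow_le_one₀ (abs_nonneg _) (hA x y))
      _ = _ := one_mul _
  calc ∑ x ∈ S, (A *ᵥ v) x ^ 2
      ≤ ∑ x ∈ S, ∑ y ∈ S.filter (G.Adj x), v y ^ 2 := sum_le_sum hlocal
    _ = ∑ y ∈ S, ∑ _x ∈ S.filter (G.Adj y), v y ^ 2 :=
        sum_comm' fun x y => by simp only [mem_filter, G.adj_comm x y]; tauto
    _ ≤ ∑ y ∈ S, v y ^ 2 := by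
        refine sum_le_sum fun y hy => ?_
        rw [sum_const, nsmul_eq_mul]
        exact mul_le_of_le_one_left (sq_nonneg _) (by exact_mod_cast hdeg y hy)
    _ ≤ ∑ y, v y ^ 2 := sum_le_univ_sum_of_nonneg fun _ => sq_nonneg _

end MaxDegOn

theorem sq_dotProduct_le {n : Type*} [Fintype n] (u w : n → ℝ) :
    (u ⬝ᵥ w) ^ 2 ≤ (u ⬝ᵥ u) * (w ⬝ᵥ w) := by
  simpa only [dotProduct, sq] using sum_mul_sq_le_sq_mul_sq univ u w

section SignedAdjacency

variable {k : ℕ}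

/-- With `P` the adjacency matrix of `P_3` and `D = diag(1, -1, 1)`, this is
`signedAdj (k + 1) = D ⊗ signedAdj k + P ⊗ 1` in the first coordinate. As `DP + PD = 0`,
its square is `1 ⊗ signedAdj k ^ 2 + P² ⊗ 1`, and `P²` has eigenvalues `0, 2, 2`. -/
def signedAdj : (k : ℕ) → Matrix (Fin k → Fin 3) (Fin k → Fin 3) ℝ
  | 0 => 0
  | k + 1 => Matrix.of fun x y =>
    if x 0 = y 0 then ![1, -1, 1] (x 0) * signedAdj k (Fin.tail x) (Fin.tail y)
    else if Fin.tail x = Fin.tail y ∧ (x 0 = 1 ∨ y 0 = 1) then 1 else 0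

/-- The tensor power of the kernel `(1, 0, -1)` of `P²`. -/
def kernelVec : (k : ℕ) → (Fin k → Fin 3) → ℝ
  | 0 => 1
  | k + 1 => fun x => ![1, 0, -1] (x 0) * kernelVec k (Fin.tail x)

theorem signedAdj_cons (t s : Fin 3) (x y : Fin k → Fin 3) :
    signedAdj (k + 1) (Fin.cons t x) (Fin.cons s y) =
      if t = s then ![1, -1, 1] t * signedAdj k x y
      else if x = y ∧ (t = 1 ∨ s = 1) then 1 else 0 := by
  simp [signedAdj]

theorem abs_signedAdj_le_one (x y : Fin k → Fin 3) : |signedAdj k x y| ≤ 1 := by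
  induction k with
  | zero => simp [signedAdj]
  | succ k ih =>
    rw [← Fin.cons_self_tail x, ← Fin.cons_self_tail y, signedAdj_cons]
    split_ifs
    · rw [abs_mul]
      refine mul_le_one₀ ?_ (abs_nonneg _) (ih _ _)
      generalize x 0 = t
      fin_cases t <;> simp
    all_goals simp

theorem signedAdj_eq_zero_of_not_adj {x y : Fin k → Fin 3} (h : ¬ (boxPower 3 k).Adj x y) :
    signedAdj k x y = 0 := by
  induction k with
  | zero => simp [signedAdj]
  | succ k ih =>
    rw [← Fin.cons_self_tail x, ← Fin.cons_self_tail y, boxPower_adj_cons_iff, not_or] at h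
    rw [← Fin.cons_self_tail x, ← Fin.cons_self_tail y, signedAdj_cons]
    split_ifs with hts hc
    · rw [ih (fun hadj => h.1 ⟨hts, hadj⟩), mul_zero]
    · refine absurd ⟨hc.1, ?_⟩ h.2
      have hpath : ∀ t s : Fin 3, t ≠ s → (t = 1 ∨ s = 1) → (pathGraph' 3).Adj t s := by
        simp only [pathGraph']; decide
      exact hpath _ _ hts hc.2
    · rfl

theorem signedAdj_transpose : (signedAdj k)ᵀ = signedAdj k := by
  induction k with
  | zero => rfl
  | succ k ih =>
    ext x y
    rw [transpose_apply, ← Fin.cons_self_tail x, ← Fin.cons_self_tail y, signedAdj_cons,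
      signedAdj_cons, ← transpose_apply (signedAdj k), ih]
    by_cases h : y 0 = x 0
    · simp [h]
    · simp only [h, Ne.symm h, if_false, eq_comm (a := Fin.tail y), or_comm]

theorem signedAdj_mulVec_comm (u w : (Fin k → Fin 3) → ℝ) :
    (signedAdj k *ᵥ u) ⬝ᵥ w = u ⬝ᵥ (signedAdj k *ᵥ w) := by
  rw [dotProduct_mulVec, ← mulVec_transpose, signedAdj_transpose, dotProduct_comm]

theorem signedAdj_mulVec_cons (v : (Fin (k + 1) → Fin 3) → ℝ) (t : Fin 3)
    (x : Fin k → Fin 3) :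
    (signedAdj (k + 1) *ᵥ v) (Fin.cons t x) = ![1, -1, 1] t * (signedAdj k *ᵥ layer v t) x +
      ![v (Fin.cons 1 x), v (Fin.cons 0 x) + v (Fin.cons 2 x), v (Fin.cons 1 x)] t := by
  rw [mulVec, dotProduct, sum_pi_fin_succ]
  simp only [signedAdj_cons, Fin.sum_univ_three, mulVec, dotProduct, layer_apply]
  fin_cases t <;> simp [mul_sum] <;> ring

theorem layer_kernelVec (t : Fin 3) :
    layer (kernelVec (k + 1)) t = (![1, 0, -1] : Fin 3 → ℝ) t • kernelVec k := by
  funext x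
  simp [kernelVec]

theorem kernelVec_dotProduct_self : kernelVec k ⬝ᵥ kernelVec k = 2 ^ k := by
  induction k with
  | zero => simp [kernelVec]
  | succ k ih =>
    rw [dotProduct_eq_sum_layer, Fin.sum_univ_three]
    simp [layer_kernelVec, ih, pow_succ]
    ring

theorem signedAdj_spectral_gap (v : (Fin k → Fin 3) → ℝ) :
    2 * 2 ^ k * (v ⬝ᵥ v) ≤
      2 ^ k * ((signedAdj k *ᵥ v) ⬝ᵥ (signedAdj k *ᵥ v)) + 2 * (v ⬝ᵥ kernelVec k) ^ 2 := by
  induction k with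
  | zero => simp [signedAdj, kernelVec, dotProduct, sq]
  | succ k ih =>
    have hlayer : ∀ t, layer (signedAdj (k + 1) *ᵥ v) t =
        (![1, -1, 1] : Fin 3 → ℝ) t • (signedAdj k *ᵥ layer v t) +
          ![layer v 1, layer v 0 + layer v 2, layer v 1] t := by
      intro t; funext x; fin_cases t <;> simp [signedAdj_mulVec_cons]
    simp only [dotProduct_eq_sum_layer _ _, Fin.sum_univ_three, hlayer, layer_kernelVec]
    simp only [Fin.isValue, cons_val_zero, cons_val_one, cons_val_two, tail_cons, head_cons,
      one_smul, neg_smul, zero_smul, add_dotProduct,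
      dotProduct_add, neg_dotProduct, dotProduct_neg, dotProduct_zero]
    set M := signedAdj k
    set e := kernelVec k
    set v₀ := layer v 0
    set v₁ := layer v 1
    set v₂ := layer v 2
    have h₀ : (M *ᵥ v₀) ⬝ᵥ v₁ = v₀ ⬝ᵥ (M *ᵥ v₁) := signedAdj_mulVec_comm _ _
    have h₂ : (M *ᵥ v₂) ⬝ᵥ v₁ = v₂ ⬝ᵥ (M *ᵥ v₁) := signedAdj_mulVec_comm _ _
    rw [dotProduct_comm v₁ (M *ᵥ v₀), h₀, dotProduct_comm v₁ (M *ᵥ v₂), h₂,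
      dotProduct_comm (M *ᵥ v₁) v₀, dotProduct_comm (M *ᵥ v₁) v₂, dotProduct_comm v₂ v₀]
    have cs₁ := sq_dotProduct_le v₁ e
    have cs₀₂ := sq_dotProduct_le (v₀ + v₂) e
    simp only [add_dotProduct, dotProduct_add, dotProduct_comm v₂ v₀,
      show e ⬝ᵥ e = 2 ^ k from kernelVec_dotProduct_self] at cs₁ cs₀₂
    rw [pow_succ]
    linear_combination 2 * ih v₀ + 2 * ih v₁ + 2 * ih v₂ + 4 * cs₁ + 2 * cs₀₂

end SignedAdjacency

theorem two_mul_card_le_of_trivial_solution {K V : Type*} [Field K] [Fintype V] [DecidableEq V]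
    (S : Finset V) (A : Matrix V V K) (e : V → K)
    (h : ∀ v : V → K, (∀ x ∉ S, v x = 0) → v ⬝ᵥ e = 0 → (∀ x ∉ S, (A *ᵥ v) x = 0) → v = 0) :
    2 * #S ≤ Fintype.card V + 1 := by
  let T : (S → K) →ₗ[K] K × (↥Sᶜ → K) :=
    ((dotProductBilin K K).flip e).prod (LinearMap.funLeft K K Subtype.val ∘ₗ A.mulVecLin) ∘ₗ
      Function.ExtendByZero.linearMap K Subtype.val
  have hT : Function.Injective T := by
    refine (injective_iff_map_eq_zero T).2 fun f hf => ?_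
    have hv := h (Function.extend Subtype.val f 0)
      (fun x hx => Function.extend_apply' _ _ _ fun ⟨s, hs⟩ => hx (hs ▸ s.2))
      (congrArg Prod.fst hf)
      (fun x hx => congrFun (congrArg Prod.snd hf) ⟨x, mem_compl.2 hx⟩)
    funext s
    simpa [Subtype.val_injective.extend_apply] using congrFun hv s
  have := LinearMap.finrank_le_finrank_of_injective hT
  simp only [Module.finrank_prod, Module.finrank_fintype_fun_eq_card, Fintype.card_coe,
    card_compl, Module.finrank_self] at this
  have := card_le_univ S
  omega

theorem eq_zero_of_maxDegOn_le_one {k : ℕ} {S : Finset (Fin k → Fin 3)}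
    (hS : maxDegOn (boxPower 3 k) S ≤ 1) {v : (Fin k → Fin 3) → ℝ} (hv : ∀ x ∉ S, v x = 0)
    (he : v ⬝ᵥ kernelVec k = 0) (hAv : ∀ x ∉ S, (signedAdj k *ᵥ v) x = 0) : v = 0 := by
  have hlocal := sum_sq_mulVec_le_of_maxDegOn_le_one hS (signedAdj k) abs_signedAdj_le_one
    (fun _ _ => signedAdj_eq_zero_of_not_adj) v hv
  have hAv_sq : (signedAdj k *ᵥ v) ⬝ᵥ (signedAdj k *ᵥ v) = ∑ x ∈ S, (signedAdj k *ᵥ v) x ^ 2 :=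
    (sum_subset (subset_univ S) fun x _ hx => by simp [hAv x hx]).symm.trans
      (sum_congr rfl fun x _ => (sq _).symm)
  have hvv : v ⬝ᵥ v = ∑ x, v x ^ 2 := sum_congr rfl fun x _ => (sq _).symm
  have hgap := signedAdj_spectral_gap v
  rw [he, hAv_sq, hvv] at hgap
  have hpos : (0 : ℝ) < 2 ^ k := by positivity
  have hle : v ⬝ᵥ v ≤ 0 := by
    rw [hvv]
    nlinarith [mul_le_mul_of_nonneg_left hlocal hpos.le]
  exact dotProduct_self_eq_zero.1 (le_antisymm hle (sum_nonneg fun _ _ => mul_self_nonneg _))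

theorem two_mul_card_le_of_maxDegOn_le_one {k : ℕ} {S : Finset (Fin k → Fin 3)}
    (hS : maxDegOn (boxPower 3 k) S ≤ 1) : 2 * #S ≤ 3 ^ k + 1 := by
  classical
  simpa using two_mul_card_le_of_trivial_solution S (signedAdj k) (kernelVec k)
    fun _ hv he hAv => eq_zero_of_maxDegOn_le_one hS hv he hAv

theorem indepNum_boxPower_three (k : ℕ) : indepNum (boxPower 3 k) = #(evenVertices 3 k) := by
  refine IsGreatest.csSup_eq ⟨⟨_, isIndepFinset_evenVertices, rfl⟩, ?_⟩
  rintro n ⟨S, hS, rfl⟩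
  have := two_mul_card_le_of_maxDegOn_le_one (hS.maxDegOn_eq_zero.trans_le zero_le_one)
  have := two_mul_card_evenVertices k
  omega

def evenTail (k : ℕ) : Finset (Fin (k + 1) → Fin 3) :=
  univ.filter fun y => Fin.tail y ∈ evenVertices 3 k

theorem card_evenTail (k : ℕ) : #(evenTail k) = 3 * #(evenVertices 3 k) := by
  rw [evenTail, card_filter, sum_pi_fin_succ]
  simp [Fin.tail_cons]

/-- Along an edge inside `evenTail k` only the first coordinate can change. -/
theorem maxDegOn_evenTail_le_two (k : ℕ) : maxDegOn (boxPower 3 (k + 1)) (evenTail k) ≤ 2 := by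
  classical
  refine maxDegOn_le_iff.2 fun y hy => ?_
  have hsub : (evenTail k).filter ((boxPower 3 (k + 1)).Adj y) ⊆
      (univ.erase (y 0)).image fun s => Fin.cons s (Fin.tail y) := by
    intro z hz
    simp only [evenTail, mem_filter, mem_univ, true_and] at hy hz
    obtain ⟨hz, hyz⟩ := hz
    rw [← Fin.cons_self_tail y, ← Fin.cons_self_tail z, boxPower_adj_cons_iff] at hyz
    rcases hyz with ⟨-, hadj⟩ | ⟨htail, hadj⟩
    · exact absurd hadj (isIndepFinset_evenVertices _ hy _ hz)
    · exact mem_image.2 ⟨z 0, mem_erase.2 ⟨hadj.ne.symm, mem_univ _⟩,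
        by rw [htail, Fin.cons_self_tail]⟩
  calc #((evenTail k).filter ((boxPower 3 (k + 1)).Adj y))
      ≤ #(univ.erase (y 0)) := (card_le_card hsub).trans card_image_le
    _ = 2 := by simp

theorem card_evenTail_eq_indepNum_add_one (k : ℕ) :
    #(evenTail k) = indepNum (boxPower 3 (k + 1)) + 1 := by
  rw [card_evenTail, indepNum_boxPower_three]
  have h₀ := two_mul_card_evenVertices k
  have h₁ := two_mul_card_evenVertices (k + 1)
  rw [pow_succ] at h₁
  omega

theorem minMaxDeg_boxPower_three (k : ℕ) (hk : 1 ≤ k) :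
    minMaxDeg (boxPower 3 k) = 2 := by
  obtain ⟨k, rfl⟩ : ∃ m, k = m + 1 := ⟨k - 1, by omega⟩
  have hmem : maxDegOn (boxPower 3 (k + 1)) (evenTail k) ∈
      {d | ∃ S, #S = indepNum (boxPower 3 (k + 1)) + 1 ∧ maxDegOn (boxPower 3 (k + 1)) S = d} :=
    ⟨_, card_evenTail_eq_indepNum_add_one k, rfl⟩
  refine le_antisymm ((csInf_le (OrderBot.bddBelow _) hmem).trans (maxDegOn_evenTail_le_two k))
    (le_csInf ⟨_, hmem⟩ ?_)
  rintro _ ⟨S, hS, rfl⟩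
  by_contra! hlt
  have hcard := two_mul_card_le_of_maxDegOn_le_one (Nat.lt_succ_iff.1 hlt)
  rw [hS, indepNum_boxPower_three] at hcard
  have := two_mul_card_evenVertices (k + 1)
  omega
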